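/- arXiv:math/0508417 — 5 statements merged into one kernel-verified Lean document; each statement's English description precedes it below -/
import Mathlib

section
/- There is an absolute constant c₁₀ > 0 such that the following holds. Let (α_r)_{r=1,...,R} be a finite sequence of real numbers, let (a_n) be a sequence of complex numbers, let N ≥ 1, and let 0 < Δ ≤ 1/2. Let K be a real number such that for every α ∈ ℝ, #{ 1 ≤ r ≤ R : ‖α_r − α‖ ≤ Δ } ≤ K, where ‖x‖ denotes the distance from x to the nearest integer. Then ∑_{r=1}^{R} |S(α_r)|² ≤ c₁₀ · K · (N + Δ^{-1}) · Z. -/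
open Finset

/-- The exponential sum `S(α) = ∑_{1 ≤ n ≤ N} a_n e(nα)` with `e(x) = exp(2πix)`. -/
noncomputable def expSum (N : ℝ) (f : ℕ → ℂ) (α : ℝ) : ℂ :=
  ∑ n ∈ Finset.Icc 1 ⌊N⌋₊, f n * Complex.exp (2 * Real.pi * Complex.I * (n : ℂ) * (α : ℂ))

/-- `Z = ∑_{1 ≤ n ≤ N} |a_n|²`. -/
noncomputable def Zsum (N : ℝ) (f : ℕ → ℂ) : ℝ :=
  ∑ n ∈ Finset.Icc 1 ⌊N⌋₊, ‖f n‖ ^ 2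

/-! Gallagher's argument. For a `C¹` function `φ` and an interval `I ∋ b` of length `δ`,
`δ φ(b) ≤ ∫_I φ + δ ∫_I |φ'|`. Applied to `φ = |S|²`, where
`|φ'| = |2 Re(S̄ S')| ≤ δ⁻¹|S|² + δ|S'|²`, this gives
`δ |S(α_r)|² ≤ 2 ∫_{I_r} |S|² + δ² ∫_{I_r} |S'|²` for the interval `I_r` of length `δ` centred
at `α_r` mod 1. When `δ ≤ Δ` every point lies in at most `K` of the `I_r`, so summing over `r`
costs `K` times integrals over two periods, which Parseval evaluates as `Z` and
`∑ |2πn a_n|² ≤ 4π²N² Z`. The choice `δ = min(Δ, 1/N)` gives `c₁₀ = 4 + 8π²`. -/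

open MeasureTheory Function ComplexConjugate

noncomputable def trigPoly (s : Finset ℕ) (c : ℕ → ℂ) (x : ℝ) : ℂ :=
  ∑ n ∈ s, c n * Complex.exp (2 * Real.pi * Complex.I * (n : ℂ) * (x : ℂ))

theorem integral_exp_two_pi_I_int_mul (k : ℤ) :
    ∫ x in (0 : ℝ)..1, Complex.exp (2 * Real.pi * Complex.I * (k : ℂ) * (x : ℂ))
      = if k = 0 then 1 else 0 := by
  split_ifs with hk
  · simp [hk]
  · have hc : 2 * Real.pi * Complex.I * (k : ℂ) ≠ 0 := by
      simp [Real.pi_ne_zero, Complex.I_ne_zero, hk]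
    have hone : Complex.exp (2 * Real.pi * Complex.I * k) = 1 := by
      rw [← Complex.exp_int_mul_two_pi_mul_I k]; ring_nf
    rw [integral_exp_mul_complex hc]
    simp [hone]

section TrigPoly

variable (s : Finset ℕ) (c : ℕ → ℂ)

theorem continuous_trigPoly : Continuous (trigPoly s c) := by
  unfold trigPoly; fun_prop

theorem hasDerivAt_trigPoly (x : ℝ) :
    HasDerivAt (trigPoly s c)
      (trigPoly s (fun n => 2 * Real.pi * Complex.I * n * c n) x) x := by
  unfold trigPoly
  refine HasDerivAt.fun_sum fun n _ => ?_
  have hlin := ((hasDerivAt_id (x : ℂ)).const_mul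
    (2 * Real.pi * Complex.I * (n : ℂ))).comp_ofReal
  exact (hlin.cexp.const_mul (c n)).congr_deriv (by simp only [id, mul_one]; ring)

theorem periodic_trigPoly : Periodic (trigPoly s c) 1 := fun x => by
  unfold trigPoly
  refine sum_congr rfl fun n _ => ?_
  have hone : Complex.exp (2 * Real.pi * Complex.I * n) = 1 := by
    rw [← Complex.exp_nat_mul_two_pi_mul_I n]; ring_nf
  rw [Complex.ofReal_add, Complex.ofReal_one, mul_add, mul_one, Complex.exp_add, hone, mul_one]

theorem ofReal_norm_sq_trigPoly (x : ℝ) :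
    ((‖trigPoly s c x‖ ^ 2 : ℝ) : ℂ) = ∑ n ∈ s, ∑ m ∈ s, c n * conj (c m) *
      Complex.exp (2 * Real.pi * Complex.I * (((n : ℤ) - m : ℤ) : ℂ) * (x : ℂ)) := by
  rw [Complex.ofReal_pow, ← Complex.mul_conj', trigPoly, map_sum, sum_mul_sum]
  refine sum_congr rfl fun n _ => sum_congr rfl fun m _ => ?_
  rw [map_mul, ← Complex.exp_conj, mul_mul_mul_comm, ← Complex.exp_add]
  simp only [map_mul, map_ofNat, Complex.conj_I, Complex.conj_ofReal, map_natCast]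
  push_cast
  ring_nf

theorem integral_norm_sq_trigPoly :
    ∫ x in (0 : ℝ)..1, ‖trigPoly s c x‖ ^ 2 = ∑ n ∈ s, ‖c n‖ ^ 2 := by
  have hint : ∀ k : ℤ, IntervalIntegrable
      (fun x : ℝ => Complex.exp (2 * Real.pi * Complex.I * (k : ℂ) * (x : ℂ))) volume 0 1 :=
    fun k => by apply Continuous.intervalIntegrable; fun_prop
  apply Complex.ofReal_injective
  rw [← intervalIntegral.integral_ofReal,
    intervalIntegral.integral_congr fun x _ => ofReal_norm_sq_trigPoly s c x,
    intervalIntegral.integral_finsetSum fun n _ => by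
      apply Continuous.intervalIntegrable; fun_prop,
    Complex.ofReal_sum]
  refine sum_congr rfl fun n hn => ?_
  rw [intervalIntegral.integral_finsetSum fun m _ => (hint _).const_mul _]
  simp_rw [intervalIntegral.integral_const_mul, integral_exp_two_pi_I_int_mul, sub_eq_zero,
    Nat.cast_inj, mul_ite, mul_one, mul_zero, sum_ite_eq s n, if_pos hn, Complex.mul_conj',
    Complex.ofReal_pow]

theorem sum_norm_sq_deriv_coeff_le {M : ℝ} (hM : ∀ n ∈ s, (n : ℝ) ≤ M) :
    ∑ n ∈ s, ‖2 * Real.pi * Complex.I * n * c n‖ ^ 2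
      ≤ (2 * Real.pi * M) ^ 2 * ∑ n ∈ s, ‖c n‖ ^ 2 := by
  rw [mul_sum]
  refine sum_le_sum fun n hn => ?_
  rw [norm_mul, norm_mul, norm_mul, norm_mul, Complex.norm_I, Complex.norm_natCast,
    Complex.norm_real, Complex.norm_ofNat, Real.norm_of_nonneg Real.pi_pos.le, mul_one, ← mul_pow]
  gcongr
  exact hM n hn

end TrigPoly

theorem sum_setIntegral_le_mul_setIntegral {ι α : Type*} [MeasurableSpace α] {μ : Measure α}
    {s : Finset ι} {I : ι → Set α} [∀ x, DecidablePred fun r => x ∈ I r] {J : Set α}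
    {g : α → ℝ} {K : ℝ} (hI : ∀ r ∈ s, MeasurableSet (I r)) (hIJ : ∀ r ∈ s, I r ⊆ J)
    (hg : IntegrableOn g J μ) (hg0 : ∀ x, 0 ≤ g x) (hK : ∀ x, (#{r ∈ s | x ∈ I r} : ℝ) ≤ K) :
    ∑ r ∈ s, ∫ x in I r, g x ∂μ ≤ K * ∫ x in J, g x ∂μ := by
  have hind : ∀ r ∈ s, ∫ x in I r, g x ∂μ = ∫ x in J, (I r).indicator g x ∂μ := fun r hr => by
    rw [setIntegral_indicator (hI r hr), Set.inter_eq_right.2 (hIJ r hr)]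
  have hcount : ∀ x, ∑ r ∈ s, (I r).indicator g x = #{r ∈ s | x ∈ I r} * g x := fun x => by
    simp only [Set.indicator_apply]
    rw [← sum_filter, sum_const, nsmul_eq_mul]
  rw [sum_congr rfl hind, ← integral_finsetSum _ fun r hr => hg.indicator (hI r hr),
    ← integral_const_mul]
  refine integral_mono (integrable_finsetSum _ fun r hr => hg.indicator (hI r hr))
    (hg.const_mul K) fun x => ?_
  rw [hcount]
  exact mul_le_mul_of_nonneg_right (hK x) (hg0 x)

theorem abs_sub_round_le_abs_fract_sub {α : Type*} [Field α] [LinearOrder α]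
    [IsStrictOrderedRing α] [FloorRing α] (a x : α) :
    |a - x - round (a - x)| ≤ |Int.fract a - x| :=
  calc |a - x - round (a - x)| ≤ |a - x - ⌊a⌋| := round_le (a - x) ⌊a⌋
    _ = |Int.fract a - x| := by rw [Int.fract]; ring_nf

theorem Function.Periodic.integral_Ioc_eq_two_mul {g : ℝ → ℝ} (hg : Periodic g 1)
    (hgc : Continuous g) : ∫ x in Set.Ioc (-1 / 2) (3 / 2), g x = 2 * ∫ x in (0 : ℝ)..1, g x := by
  have h := hg.intervalIntegral_add_zsmul_eq 2 (-1 / 2) hgc.intervalIntegrable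
  rw [hg.intervalIntegral_add_eq (-1 / 2) 0] at h
  norm_num at h ⊢
  rw [← intervalIntegral.integral_of_le (by norm_num), h]

section Gallagher
variable {E : Type*} [NormedAddCommGroup E] [InnerProductSpace ℝ E]

theorem abs_two_mul_real_inner_le (x y : E) {δ : ℝ} (hδ : 0 < δ) :
    |2 * inner ℝ x y| ≤ δ⁻¹ * ‖x‖ ^ 2 + δ * ‖y‖ ^ 2 := by
  have hsq : 0 ≤ δ⁻¹ * (‖x‖ - δ * ‖y‖) ^ 2 := by positivity
  have hexp : δ⁻¹ * (‖x‖ - δ * ‖y‖) ^ 2 = δ⁻¹ * ‖x‖ ^ 2 + δ * ‖y‖ ^ 2 - 2 * (‖x‖ * ‖y‖) := by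
    field_simp; ring
  rw [abs_mul, abs_two]
  linarith [abs_real_inner_le_norm x y]

theorem mul_le_integral_add_mul_integral_abs_deriv {φ φ' : ℝ → ℝ}
    (hφ : ∀ x, HasDerivAt φ (φ' x) x) (hφ' : Continuous φ') {a b c : ℝ} (hab : a ≤ b)
    (hc : c ∈ Set.Icc a b) :
    (b - a) * φ c ≤ (∫ x in a..b, φ x) + (b - a) * ∫ x in a..b, |φ' x| := by
  have hφc : Continuous φ := continuous_iff_continuousAt.2 fun x => (hφ x).continuousAt
  have hosc : ∀ y ∈ Set.Icc a b, φ c ≤ φ y + ∫ x in a..b, |φ' x| := by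
    intro y hy
    have hsub : Set.uIoc y c ⊆ Set.Ioc a b := by
      rw [← Set.uIoc_of_le hab]
      exact Set.uIoc_subset_uIoc_of_uIcc_subset_uIcc
        (Set.uIcc_subset_uIcc (Set.Icc_subset_uIcc hy) (Set.Icc_subset_uIcc hc))
    calc φ c = φ y + ∫ x in y..c, φ' x := by
          rw [intervalIntegral.integral_eq_sub_of_hasDerivAt (fun x _ => hφ x)
            (hφ'.intervalIntegrable _ _)]
          ring
      _ ≤ φ y + ∫ x in Set.uIoc y c, ‖φ' x‖ := by
          gcongr
          exact (Real.le_norm_self _).trans intervalIntegral.norm_integral_le_integral_norm_uIoc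
      _ ≤ φ y + ∫ x in Set.Ioc a b, ‖φ' x‖ := by
          linarith [setIntegral_mono_set (μ := volume) hφ'.norm.integrableOn_Ioc
            (Filter.Eventually.of_forall fun x => norm_nonneg _) hsub.eventuallyLE]
      _ = φ y + ∫ x in a..b, |φ' x| := by
          rw [intervalIntegral.integral_of_le hab]; rfl
  have hint : ∫ _ in a..b, φ c ≤ ∫ y in a..b, (φ y + ∫ x in a..b, |φ' x|) :=
    intervalIntegral.integral_mono_on hab intervalIntegrable_const
    ((hφc.intervalIntegrable a b).add intervalIntegrable_const) hosc
  rwa [intervalIntegral.integral_const, intervalIntegral.integral_add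
    (hφc.intervalIntegrable a b) intervalIntegrable_const, intervalIntegral.integral_const,
    smul_eq_mul, smul_eq_mul] at hint

theorem mul_norm_sq_le_integral {S S' : ℝ → E} (hS : ∀ x, HasDerivAt S (S' x) x)
    (hS' : Continuous S') {δ : ℝ} (hδ : 0 < δ) (b : ℝ) :
    δ * ‖S b‖ ^ 2 ≤ 2 * (∫ x in (b - δ / 2)..(b + δ / 2), ‖S x‖ ^ 2)
      + δ ^ 2 * ∫ x in (b - δ / 2)..(b + δ / 2), ‖S' x‖ ^ 2 := by
  have hSc : Continuous S := continuous_iff_continuousAt.2 fun x => (hS x).continuousAt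
  have hlen : (b + δ / 2) - (b - δ / 2) = δ := by ring
  have hmain := mul_le_integral_add_mul_integral_abs_deriv (fun x => (hS x).norm_sq)
    (by fun_prop) (a := b - δ / 2) (b := b + δ / 2) (c := b) (by linarith)
    ⟨by linarith, by linarith⟩
  have hderiv : ∫ x in (b - δ / 2)..(b + δ / 2), |2 * inner ℝ (S x) (S' x)|
      ≤ δ⁻¹ * (∫ x in (b - δ / 2)..(b + δ / 2), ‖S x‖ ^ 2)
        + δ * ∫ x in (b - δ / 2)..(b + δ / 2), ‖S' x‖ ^ 2 := by
    rw [← intervalIntegral.integral_const_mul, ← intervalIntegral.integral_const_mul,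
      ← intervalIntegral.integral_add (by apply Continuous.intervalIntegrable; fun_prop)
        (by apply Continuous.intervalIntegrable; fun_prop)]
    exact intervalIntegral.integral_mono_on (by linarith)
      (by apply Continuous.intervalIntegrable; fun_prop)
      (by apply Continuous.intervalIntegrable; fun_prop)
      fun x _ => abs_two_mul_real_inner_le (S x) (S' x) hδ
  rw [hlen] at hmain
  calc δ * ‖S b‖ ^ 2
      ≤ (∫ x in (b - δ / 2)..(b + δ / 2), ‖S x‖ ^ 2)
        + δ * ((δ⁻¹ * ∫ x in (b - δ / 2)..(b + δ / 2), ‖S x‖ ^ 2)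
          + δ * ∫ x in (b - δ / 2)..(b + δ / 2), ‖S' x‖ ^ 2) :=
        hmain.trans (by gcongr)
    _ = _ := by field_simp; ring

theorem sum_norm_sq_le_of_periodic {ι : Type*} {S S' : ℝ → E}
    (hS : ∀ x, HasDerivAt S (S' x) x) (hS' : Continuous S')
    (hSper : Periodic S 1) (hS'per : Periodic S' 1) (s : Finset ι) (α : ι → ℝ)
    {δ Δ K : ℝ} (hδ : 0 < δ) (hδΔ : δ ≤ Δ) (hΔ : Δ ≤ 1 / 2)
    (hK : ∀ β, (#{r ∈ s | |α r - β - round (α r - β)| ≤ Δ} : ℝ) ≤ K) :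
    δ * ∑ r ∈ s, ‖S (α r)‖ ^ 2
      ≤ K * (4 * (∫ x in (0 : ℝ)..1, ‖S x‖ ^ 2) + 2 * δ ^ 2 * ∫ x in (0 : ℝ)..1, ‖S' x‖ ^ 2) := by
  have hSc : Continuous S := continuous_iff_continuousAt.2 fun x => (hS x).continuousAt
  -- centring at `Int.fract (α r)` keeps every interval inside the two periods `(-1/2, 3/2]`
  set I : ι → Set ℝ := fun r => Set.Ioc (Int.fract (α r) - δ / 2) (Int.fract (α r) + δ / 2)
  have hIJ : ∀ r ∈ s, I r ⊆ Set.Ioc (-1 / 2) (3 / 2) := fun r _ =>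
    Set.Ioc_subset_Ioc (by linarith [Int.fract_nonneg (α r)])
      (by linarith [Int.fract_lt_one (α r)])
  have hmult : ∀ x, (#{r ∈ s | x ∈ I r} : ℝ) ≤ K := by
    refine fun x => le_trans ?_ (hK x)
    refine Nat.cast_le.2 (card_le_card (monotone_filter_right s fun r _ hr => ?_))
    refine (abs_sub_round_le_abs_fract_sub (α r) x).trans ?_
    rw [abs_le]
    constructor <;> linarith [hr.1, hr.2]
  have hcover : ∀ g : ℝ → ℝ, Continuous g → (∀ x, 0 ≤ g x) → Periodic g 1 →
      ∑ r ∈ s, ∫ x in (Int.fract (α r) - δ / 2)..(Int.fract (α r) + δ / 2), g x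
        ≤ K * (2 * ∫ x in (0 : ℝ)..1, g x) := fun g hgc hg0 hg => by
    rw [← hg.integral_Ioc_eq_two_mul hgc,
      sum_congr rfl fun r _ => intervalIntegral.integral_of_le (by linarith)]
    exact sum_setIntegral_le_mul_setIntegral (fun r _ => measurableSet_Ioc) hIJ
      hgc.integrableOn_Ioc hg0 hmult
  have hlocal : ∀ r ∈ s, δ * ‖S (α r)‖ ^ 2
      ≤ 2 * (∫ x in (Int.fract (α r) - δ / 2)..(Int.fract (α r) + δ / 2), ‖S x‖ ^ 2)
        + δ ^ 2 * ∫ x in (Int.fract (α r) - δ / 2)..(Int.fract (α r) + δ / 2), ‖S' x‖ ^ 2 :=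
    fun r _ => by
      rw [← hSper.sub_int_mul_eq ⌊α r⌋, mul_one, ← Int.fract]
      exact mul_norm_sq_le_integral hS hS' hδ _
  calc δ * ∑ r ∈ s, ‖S (α r)‖ ^ 2 = ∑ r ∈ s, δ * ‖S (α r)‖ ^ 2 := mul_sum _ _ _
    _ ≤ _ := sum_le_sum hlocal
    _ = _ := by rw [sum_add_distrib, ← mul_sum, ← mul_sum]
    _ ≤ 2 * (K * (2 * ∫ x in (0 : ℝ)..1, ‖S x‖ ^ 2))
        + δ ^ 2 * (K * (2 * ∫ x in (0 : ℝ)..1, ‖S' x‖ ^ 2)) := by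
      gcongr
      · exact hcover _ (by fun_prop) (fun x => by positivity) fun x => by rw [hSper x]
      · exact hcover _ (by fun_prop) (fun x => by positivity) fun x => by rw [hS'per x]
    _ = _ := by ring

end Gallagher

theorem sum_norm_sq_trigPoly_le {ι : Type*} (s : Finset ℕ) (c : ℕ → ℂ) {N : ℝ} (hN : 0 < N)
    (hs : ∀ n ∈ s, (n : ℝ) ≤ N) (t : Finset ι) (α : ι → ℝ) {Δ K : ℝ} (hΔ : 0 < Δ)
    (hΔ2 : Δ ≤ 1 / 2) (hK : ∀ β, (#{r ∈ t | |α r - β - round (α r - β)| ≤ Δ} : ℝ) ≤ K) :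
    ∑ r ∈ t, ‖trigPoly s c (α r)‖ ^ 2
      ≤ (4 + 8 * Real.pi ^ 2) * K * (N + Δ⁻¹) * ∑ n ∈ s, ‖c n‖ ^ 2 := by
  set Z := ∑ n ∈ s, ‖c n‖ ^ 2
  set δ := min Δ N⁻¹
  have hδ : 0 < δ := lt_min hΔ (inv_pos.2 hN)
  have hK0 : 0 ≤ K := (Nat.cast_nonneg _).trans (hK 0)
  have hZ0 : 0 ≤ Z := sum_nonneg fun n _ => by positivity
  have hsieve := sum_norm_sq_le_of_periodic (hasDerivAt_trigPoly s c) (continuous_trigPoly _ _)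
    (periodic_trigPoly s c) (periodic_trigPoly _ _) t α hδ (min_le_left _ _) hΔ2 hK
  rw [integral_norm_sq_trigPoly, integral_norm_sq_trigPoly] at hsieve
  have hδinv : δ⁻¹ ≤ N + Δ⁻¹ := by
    rcases min_choice Δ N⁻¹ with h | h <;> simp only [δ, h, inv_inv] <;>
      linarith [inv_pos.2 hΔ]
  have hδN : δ * N ^ 2 ≤ N :=
    calc δ * N ^ 2 ≤ N⁻¹ * N ^ 2 := by gcongr; exact min_le_right _ _
      _ = N := by field_simp
  calc ∑ r ∈ t, ‖trigPoly s c (α r)‖ ^ 2 = δ⁻¹ * (δ * ∑ r ∈ t, ‖trigPoly s c (α r)‖ ^ 2) := by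
        rw [inv_mul_cancel_left₀ hδ.ne']
    _ ≤ δ⁻¹ * (K * (4 * Z + 2 * δ ^ 2 * ((2 * Real.pi * N) ^ 2 * Z))) := by
        refine mul_le_mul_of_nonneg_left (hsieve.trans ?_) (inv_nonneg.2 hδ.le)
        gcongr
        exact sum_norm_sq_deriv_coeff_le s c hs
    _ = 4 * K * Z * δ⁻¹ + 8 * Real.pi ^ 2 * K * Z * (δ * N ^ 2) := by
        field_simp; ring
    _ ≤ 4 * K * Z * (N + Δ⁻¹) + 8 * Real.pi ^ 2 * K * Z * N := by gcongr
    _ ≤ (4 + 8 * Real.pi ^ 2) * K * (N + Δ⁻¹) * Z := by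
        nlinarith [mul_nonneg (mul_nonneg (sq_nonneg Real.pi) (mul_nonneg hK0 hZ0))
          (inv_nonneg.2 hΔ.le)]

/-- Lemma 1 (a variant of the large sieve): if every interval of length `2Δ` (mod 1)
contains at most `K` of the points `α_1, …, α_R`, then
`∑_{r ≤ R} |S(α_r)|² ≤ c₁₀ K (N + Δ⁻¹) Z`. Here `‖x‖`, the distance from `x` to the
nearest integer, is realized as `|x - round x|`. -/
theorem stmt_4 :
    ∃ c₁₀ : ℝ, 0 < c₁₀ ∧
      ∀ (R : ℕ) (α : ℕ → ℝ) (f : ℕ → ℂ) (N Δ K : ℝ),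
        1 ≤ N → 0 < Δ → Δ ≤ 1 / 2 →
        (∀ β : ℝ,
          (((Finset.Icc 1 R).filter
              (fun r => |α r - β - round (α r - β)| ≤ Δ)).card : ℝ) ≤ K) →
        ∑ r ∈ Finset.Icc 1 R, ‖expSum N f (α r)‖ ^ 2
          ≤ c₁₀ * K * (N + Δ⁻¹) * Zsum N f := by
  refine ⟨4 + 8 * Real.pi ^ 2, by positivity, fun R α f N Δ K hN hΔ hΔ2 hK => ?_⟩
  have hfreq : ∀ n ∈ Icc 1 ⌊N⌋₊, (n : ℝ) ≤ N := fun n hn =>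
    (Nat.cast_le.2 (mem_Icc.1 hn).2).trans (Nat.floor_le (by linarith))
  exact sum_norm_sq_trigPoly_le _ f (by linarith) hfreq _ α hΔ hΔ2 hK
end

section
/- There is an absolute constant c₁₁ > 0 such that the following holds. Let 0 ≤ M ≤ Q, let 𝒮 be a finite set of positive integers contained in (M, M+Q], let 0 < Δ ≤ 1/2, and let α ∈ ℝ. Let P(α) = #{ (a,q) : q ∈ 𝒮, 1 ≤ a ≤ q, gcd(a,q)=1, α − Δ ≤ a/q ≤ α + Δ }, and let U = 1 if M < 1/√Δ and U = 0 otherwise. Then P(α) ≤ c₁₁ · ( U + max_{r ≤ 1/√Δ} max_{Δ ≤ z ≤ √Δ/r} max_{h ∈ ℤ, gcd(h,r)=1} ∑_{t ∣ r} ∑_{0 < m ≤ 4rzQ/t, gcd(m, r/t)=1} A_t( ΔQ/(tz), r/t, hm ) ), where the maximum over r runs over positive integers r ≤ 1/√Δ, the maximum over z runs over real z with Δ ≤ z ≤ √Δ/r, and the inner sums run over positive divisors t of r and positive integers m. -/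
open Finset

/-- `A_t(u,k,l) = max_{M/t ≤ y ≤ (M+Q)/t} #{q ∈ 𝒮_t : y < q ≤ y+u, q ≡ l (mod k)}`,
where `𝒮_t = {q : tq ∈ 𝒮}`. -/
noncomputable def A (𝒮 : Finset ℕ) (M Q : ℝ) (t k : ℕ) (l : ℤ) (u : ℝ) : ℕ :=
  sSup {n : ℕ | ∃ y : ℝ, M / t ≤ y ∧ y ≤ (M + Q) / t ∧
    n = Set.ncard {q : ℕ | t * q ∈ 𝒮 ∧ y < (q : ℝ) ∧ (q : ℝ) ≤ y + u ∧
      (q : ℤ) ≡ l [ZMOD (k : ℤ)]}}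

/-!
Fix a Dirichlet approximation `h / r` of `α` with `r ≤ Δ^(-1/2)` and `|α - h / r| ≤ √Δ / r`, and
put `z = max Δ ((|α - h / r| + Δ) / 2)`. Sort the counted fractions `a / q` by their determinant
`D = a r - h q` against `h / r`. If `D = 0` then `a / q = h / r`, so `q = r ≤ Δ^(-1/2)`: this one
fraction is the term `U`. Otherwise write `t = gcd q r` and `D = ± t m` with `m > 0`; then
`m ≤ 4 r z Q / t`, `m` is coprime to `r / t`, and `q / t ≡ ∓ h⁻¹ m (mod r / t)`. Two fractions
with the same sign and the same `(t, m)` satisfy `D (q₂ - q₁) = r (a₁ q₂ - a₂ q₁)`, whence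
`|q₁ - q₂| z ≤ 6 Δ Q`; so their values `q / t` lie in seven consecutive windows of length
`Δ Q / (t z)`, each of which is counted by `A_t`.
-/

lemma card_le_card_filter_eq_zero_add_sign {ι : Type*} (s : Finset ι) (f : ι → ℤ) :
    s.card ≤ (s.filter (f · = 0)).card + (s.filter (0 < 1 * f ·)).card +
      (s.filter (0 < -1 * f ·)).card := by
  classical
  rw [add_assoc, ← card_filter_add_card_filter_not (f · = 0)]
  gcongr
  refine (card_le_card fun i hi => ?_).trans (card_union_le _ _)
  simp only [mem_filter, mem_union, one_mul, neg_one_mul, neg_pos] at hi ⊢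
  obtain ⟨hi, hne⟩ := hi
  exact (lt_or_gt_of_ne hne).symm.imp (⟨hi, ·⟩) (⟨hi, ·⟩)

section Windows

variable {𝒮 : Finset ℕ} {M Q u : ℝ} {t k : ℕ} {l : ℤ}

lemma card_le_A (hS : ∀ q ∈ 𝒮, M < (q : ℝ) ∧ (q : ℝ) ≤ M + Q) (ht : 0 < t) {y : ℝ}
    (hy : M / t ≤ y) {G : Finset ℕ}
    (hG : ∀ q ∈ G, t * q ∈ 𝒮 ∧ y < (q : ℝ) ∧ (q : ℝ) ≤ y + u ∧ (q : ℤ) ≡ l [ZMOD (k : ℤ)]) :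
    G.card ≤ A 𝒮 M Q t k l u := by
  obtain rfl | ⟨q₀, hq₀⟩ := G.eq_empty_or_nonempty
  · simp
  have htR : (0 : ℝ) < t := by exact_mod_cast ht
  have hfin : {q : ℕ | t * q ∈ 𝒮}.Finite :=
    𝒮.finite_toSet.preimage (mul_right_injective₀ ht.ne').injOn
  have hy' : y ≤ (M + Q) / t := by
    obtain ⟨hq₀S, hyq₀, -⟩ := hG q₀ hq₀
    rw [le_div_iff₀ htR]
    have := (hS _ hq₀S).2
    push_cast at this
    nlinarith
  have hbdd : BddAbove {n : ℕ | ∃ y : ℝ, M / t ≤ y ∧ y ≤ (M + Q) / t ∧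
      n = Set.ncard {q : ℕ | t * q ∈ 𝒮 ∧ y < (q : ℝ) ∧ (q : ℝ) ≤ y + u ∧
        (q : ℤ) ≡ l [ZMOD (k : ℤ)]}} := by
    refine ⟨{q : ℕ | t * q ∈ 𝒮}.ncard, ?_⟩
    rintro _ ⟨y, -, -, rfl⟩
    exact Set.ncard_le_ncard (fun q hq => hq.1) hfin
  calc G.card = (G : Set ℕ).ncard := (Set.ncard_coe_finset G).symm
    _ ≤ Set.ncard {q : ℕ | t * q ∈ 𝒮 ∧ y < (q : ℝ) ∧ (q : ℝ) ≤ y + u ∧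
          (q : ℤ) ≡ l [ZMOD (k : ℤ)]} :=
        Set.ncard_le_ncard (fun q hq => hG q hq) (hfin.subset fun q hq => hq.1)
    _ ≤ A 𝒮 M Q t k l u := le_csSup hbdd ⟨y, hy, hy', rfl⟩

lemma card_le_mul_A (hS : ∀ q ∈ 𝒮, M < (q : ℝ) ∧ (q : ℝ) ≤ M + Q) (ht : 0 < t) (hu : 0 ≤ u) :
    ∀ (n : ℕ) (L : ℝ) (G : Finset ℕ), M / t ≤ L →
      (∀ q ∈ G, t * q ∈ 𝒮 ∧ L < (q : ℝ) ∧ (q : ℝ) ≤ L + n * u ∧ (q : ℤ) ≡ l [ZMOD (k : ℤ)]) →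
      G.card ≤ n * A 𝒮 M Q t k l u := by
  intro n
  induction n with
  | zero =>
    intro L G _ hG
    simp only [zero_mul, nonpos_iff_eq_zero, card_eq_zero]
    refine eq_empty_of_forall_notMem fun q hq => ?_
    obtain ⟨-, hLq, hqL, -⟩ := hG q hq
    push_cast at hqL
    linarith
  | succ n ih =>
    intro L G hL hG
    rw [← card_filter_add_card_filter_not (fun q : ℕ => (q : ℝ) ≤ L + u), add_mul, one_mul,
      add_comm (n * _)]
    gcongr
    · refine card_le_A hS ht hL fun q hq => ?_
      obtain ⟨hq, hle⟩ := mem_filter.1 hq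
      obtain ⟨hqS, hLq, -, hcong⟩ := hG q hq
      exact ⟨hqS, hLq, hle, hcong⟩
    · refine ih (L + u) _ (by linarith) fun q hq => ?_
      obtain ⟨hq, hgt⟩ := mem_filter.1 hq
      obtain ⟨hqS, -, hqle, hcong⟩ := hG q hq
      push_cast at hqle
      exact ⟨hqS, not_le.1 hgt, by linarith, hcong⟩

lemma card_le_mul_A_of_abs_sub_le (hS : ∀ q ∈ 𝒮, M < (q : ℝ) ∧ (q : ℝ) ≤ M + Q) (ht : 0 < t)
    (hu : 0 < u) (n : ℕ) {G : Finset ℕ}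
    (hG : ∀ q ∈ G, t * q ∈ 𝒮 ∧ (q : ℤ) ≡ l [ZMOD (k : ℤ)])
    (hspan : ∀ q₁ ∈ G, ∀ q₂ ∈ G, |(q₁ : ℝ) - q₂| ≤ n * u) :
    G.card ≤ (n + 1) * A 𝒮 M Q t k l u := by
  obtain rfl | hne := G.eq_empty_or_nonempty
  · simp
  have htR : (0 : ℝ) < t := by exact_mod_cast ht
  set x₀ := G.min' hne
  refine card_le_mul_A hS ht hu.le (n + 1) (max (M / t) (x₀ - u)) G (le_max_left _ _)
    fun q hq => ⟨(hG q hq).1, max_lt ?_ ?_, ?_, (hG q hq).2⟩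
  · rw [div_lt_iff₀ htR]
    have := (hS _ (hG q hq).1).1
    push_cast at this
    linarith
  · have : x₀ ≤ q := G.min'_le q hq
    have : (x₀ : ℝ) ≤ q := by exact_mod_cast this
    linarith
  · have := (abs_le.1 (hspan q hq x₀ (G.min'_mem hne))).2
    have := le_max_right (M / t) (x₀ - u)
    push_cast
    linarith

end Windows

section Approximation

variable {M Q α Δ h r z q a : ℝ}

lemma abs_mul_sub_mul_eq (hq : 0 < q) (hr : 0 < r) :
    |a * r - h * q| = q * r * |a / q - h / r| := by
  rw [← abs_of_pos (mul_pos hq hr), ← abs_mul]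
  congr 1
  field_simp

lemma abs_mul_sub_mul_le_four_mul (hM : 0 ≤ M) (hMQ : M ≤ Q) (hr : 0 < r)
    (hq : M < q ∧ q ≤ M + Q) (ha : |a / q - α| ≤ Δ) (hz : z = max Δ ((|α - h / r| + Δ) / 2)) :
    |a * r - h * q| ≤ 4 * r * z * Q := by
  have hq0 : 0 < q := by linarith
  have hz' : |α - h / r| + Δ ≤ 2 * z := by
    rw [hz]; linarith [le_max_right Δ ((|α - h / r| + Δ) / 2)]
  have hdist : |a / q - h / r| ≤ 2 * z :=
    (abs_sub_le _ α _).trans (by linarith [abs_sub_comm α (a / q)])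
  rw [abs_mul_sub_mul_eq hq0 hr]
  have hqr : q * r ≤ 2 * Q * r := by gcongr; linarith
  calc q * r * |a / q - h / r| ≤ (2 * Q) * r * (2 * z) :=
        mul_le_mul hqr hdist (abs_nonneg _) (by nlinarith)
    _ = 4 * r * z * Q := by ring

lemma abs_sub_mul_le_of_mul_sub_mul_eq {q₁ q₂ a₁ a₂ : ℝ} (hM : 0 ≤ M) (hMQ : M ≤ Q) (hr : 0 < r)
    (hq₁ : M < q₁ ∧ q₁ ≤ M + Q) (hq₂ : M < q₂ ∧ q₂ ≤ M + Q)
    (ha₁ : |a₁ / q₁ - α| ≤ Δ) (ha₂ : |a₂ / q₂ - α| ≤ Δ)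
    (hdet : a₁ * r - h * q₁ = a₂ * r - h * q₂) (hz : z = max Δ ((|α - h / r| + Δ) / 2)) :
    |q₁ - q₂| * z ≤ 6 * Δ * Q := by
  set β := |α - h / r|
  have hq₁0 : 0 < q₁ := by linarith
  have hq₂0 : 0 < q₂ := by linarith
  have hΔ : 0 ≤ Δ := (abs_nonneg _).trans ha₁
  have hlow : (β - Δ) * (q₁ * r) ≤ |a₁ * r - h * q₁| := by
    rw [abs_mul_sub_mul_eq hq₁0 hr, mul_comm]
    gcongr
    linarith [abs_sub_le α (a₁ / q₁) (h / r), abs_sub_comm α (a₁ / q₁)]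
  have hcross : |a₁ * r - h * q₁| * |q₁ - q₂| ≤ 2 * Δ * (q₂ * (q₁ * r)) := by
    have hD : (a₁ * r - h * q₁) * (q₂ - q₁) = q₂ * (q₁ * r) * (a₁ / q₁ - a₂ / q₂) := by
      field_simp
      linear_combination (-q₁) * hdet
    rw [abs_sub_comm q₁ q₂, ← abs_mul, hD, abs_mul, abs_of_pos (by positivity), mul_comm]
    gcongr
    linarith [abs_sub_le (a₁ / q₁) α (a₂ / q₂), abs_sub_comm α (a₂ / q₂)]
  have hX : |q₁ - q₂| ≤ Q := abs_sub_le_iff.2 ⟨by linarith, by linarith⟩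
  have hXβ : (β - Δ) * |q₁ - q₂| ≤ 4 * Δ * Q := by
    have : (β - Δ) * |q₁ - q₂| * (q₁ * r) ≤ 2 * Δ * q₂ * (q₁ * r) := by
      nlinarith [abs_nonneg (q₁ - q₂)]
    nlinarith [le_of_mul_le_mul_right this (by positivity)]
  rw [hz, mul_max_of_nonneg _ _ (abs_nonneg _)]
  refine max_le (by nlinarith) ?_
  -- For `β ≥ 2Δ` the bound `hXβ` gives it, since then `(β + Δ) / 2 ≤ 3 (β - Δ) / 2`;
  -- otherwise `(β + Δ) / 2 ≤ 3Δ / 2` and `hX` suffices.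
  rcases le_total β (2 * Δ) with hβ | hβ <;> nlinarith [abs_nonneg (q₁ - q₂)]

end Approximation

lemma exists_isCoprime_abs_sub_div_mul_le {s : ℝ} (hs : 0 < s) (hs1 : s ≤ 1) (α : ℝ) :
    ∃ (r : ℕ) (h : ℤ), 0 < r ∧ (r : ℝ) ≤ 1 / s ∧ |α - h / r| * r ≤ s ∧ IsCoprime h r := by
  have hn : 0 < ⌊1 / s⌋₊ := Nat.floor_pos.2 (by rwa [le_div_iff₀ hs, one_mul])
  obtain ⟨x, hx, hden⟩ := Real.exists_rat_abs_sub_le_and_den_le α hn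
  have hr : (0 : ℝ) < x.den := by exact_mod_cast x.pos
  refine ⟨x.den, x.num, x.pos, (Nat.cast_le.2 hden).trans (Nat.floor_le (by positivity)), ?_,
    Int.isCoprime_iff_gcd_eq_one.2 x.reduced⟩
  rw [← Rat.cast_def, ← le_div_iff₀ hr]
  refine hx.trans ?_
  rw [div_le_div_iff₀ (by positivity) hr, one_mul]
  have := Nat.lt_floor_add_one (1 / s)
  rw [div_lt_iff₀ hs] at this
  nlinarith

lemma max_le_sqrt_div {Δ β r : ℝ} (hΔ : 0 < Δ) (hr : 0 < r) (hr_le : r ≤ 1 / √Δ)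
    (hβ : β * r ≤ √Δ) : max Δ ((β + Δ) / 2) ≤ √Δ / r := by
  have hs := Real.sqrt_pos.2 hΔ
  have hΔr : Δ * r ≤ √Δ := by
    rw [le_div_iff₀ hs] at hr_le
    nlinarith [Real.mul_self_sqrt hΔ.le]
  rw [le_div_iff₀ hr, max_mul_of_nonneg _ _ hr.le]
  exact max_le hΔr (by linarith)

noncomputable def fareyPairs (𝒮 : Finset ℕ) (α Δ : ℝ) : Finset (Σ _ : ℕ, ℕ) :=
  𝒮.sigma fun q => (Icc 1 q).filter
    fun a => Nat.gcd a q = 1 ∧ α - Δ ≤ (a : ℝ) / q ∧ (a : ℝ) / q ≤ α + Δ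

def pairDet (r : ℕ) (h : ℤ) (p : Σ _ : ℕ, ℕ) : ℤ := p.2 * r - h * p.1

def reducedPairDet (r : ℕ) (h : ℤ) (p : Σ _ : ℕ, ℕ) : ℤ :=
  p.2 * (r / p.1.gcd r : ℕ) - h * (p.1 / p.1.gcd r : ℕ)

section FareyPairs

variable {𝒮 : Finset ℕ} {α Δ : ℝ} {r : ℕ} {h : ℤ} {p p' : Σ _ : ℕ, ℕ}

lemma card_fareyPairs : (fareyPairs 𝒮 α Δ).card = ∑ q ∈ 𝒮, ((Icc 1 q).filter
    fun a => Nat.gcd a q = 1 ∧ α - Δ ≤ (a : ℝ) / q ∧ (a : ℝ) / q ≤ α + Δ).card :=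
  card_sigma _ _

lemma of_mem_fareyPairs (hp : p ∈ fareyPairs 𝒮 α Δ) :
    p.1 ∈ 𝒮 ∧ 1 ≤ p.2 ∧ Nat.Coprime p.2 p.1 ∧ |(p.2 : ℝ) / p.1 - α| ≤ Δ := by
  simp only [fareyPairs, mem_sigma, mem_filter, mem_Icc] at hp
  obtain ⟨hq, ⟨ha, -⟩, hcop, hlo, hhi⟩ := hp
  exact ⟨hq, ha, hcop, abs_sub_le_iff.2 ⟨by linarith, by linarith⟩⟩

lemma eq_of_pairDet_eq (hr : 0 < r) (hfst : p.1 = p'.1) (hdet : pairDet r h p = pairDet r h p') :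
    p = p' := by
  obtain ⟨q, a⟩ := p
  obtain ⟨q', a'⟩ := p'
  obtain rfl : q = q' := hfst
  have : (a : ℤ) * r = a' * r := by unfold pairDet at hdet; linarith
  rw [mul_left_inj' (by positivity), Nat.cast_inj] at this
  rw [this]

lemma fst_eq_of_pairDet_eq_zero (hr : 0 < r) (hh : IsCoprime h r)
    (hp : p ∈ fareyPairs 𝒮 α Δ) (hdet : pairDet r h p = 0) : p.1 = r := by
  obtain ⟨-, -, hcop, -⟩ := of_mem_fareyPairs hp
  have hcop' : IsCoprime (p.1 : ℤ) p.2 := Nat.isCoprime_iff_coprime.2 hcop.symm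
  have heq : (p.2 : ℤ) * r = h * p.1 := by unfold pairDet at hdet; linarith
  have h₁ : (p.1 : ℤ) ∣ r := hcop'.dvd_of_dvd_mul_left ⟨h, by rw [heq, mul_comm]⟩
  have h₂ : (r : ℤ) ∣ p.1 := hh.symm.dvd_of_dvd_mul_left ⟨p.2, by rw [← heq, mul_comm]⟩
  exact_mod_cast Int.dvd_antisymm (by positivity) (by positivity) h₁ h₂

lemma gcd_mul_reducedPairDet (r : ℕ) (h : ℤ) (p : Σ _ : ℕ, ℕ) :
    (p.1.gcd r : ℤ) * reducedPairDet r h p = pairDet r h p := by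
  have hq : ((p.1.gcd r : ℕ) : ℤ) * (p.1 / p.1.gcd r : ℕ) = p.1 := by
    exact_mod_cast Nat.mul_div_cancel' (Nat.gcd_dvd_left p.1 r)
  have hr : ((p.1.gcd r : ℕ) : ℤ) * (r / p.1.gcd r : ℕ) = r := by
    exact_mod_cast Nat.mul_div_cancel' (Nat.gcd_dvd_right p.1 r)
  rw [pairDet, reducedPairDet, ← hq, ← hr]
  ring

lemma isCoprime_reducedPairDet (hr : 0 < r) (hh : IsCoprime h r) :
    IsCoprime (reducedPairDet r h p) (r / p.1.gcd r : ℕ) := by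
  have hqr : IsCoprime ((p.1 / p.1.gcd r : ℕ) : ℤ) (r / p.1.gcd r : ℕ) :=
    Nat.isCoprime_iff_coprime.2 (Nat.coprime_div_gcd_div_gcd (Nat.gcd_pos_of_pos_right _ hr))
  have hhr : IsCoprime h (r / p.1.gcd r : ℕ) :=
    hh.of_isCoprime_of_dvd_right
      (Int.natCast_dvd_natCast.2 (Nat.div_dvd_of_dvd (Nat.gcd_dvd_right _ _)))
  have := ((hhr.mul_left hqr).neg_left).add_mul_right_left (p.2 : ℤ)
  rwa [reducedPairDet, sub_eq_neg_add]

lemma modEq_reducedPairDet {u v ε : ℤ} (hbez : u * h + v * r = 1) (hε : ε * ε = 1) :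
    ((p.1 / p.1.gcd r : ℕ) : ℤ) ≡ -ε * u * (ε * reducedPairDet r h p)
      [ZMOD (r / p.1.gcd r : ℕ)] := by
  have hr : ((p.1.gcd r : ℕ) : ℤ) * (r / p.1.gcd r : ℕ) = r := by
    exact_mod_cast Nat.mul_div_cancel' (Nat.gcd_dvd_right p.1 r)
  refine Int.modEq_iff_dvd.2 ⟨-u * p.2 - v * p.1.gcd r * (p.1 / p.1.gcd r : ℕ), ?_⟩
  rw [reducedPairDet]
  linear_combination (-u * (p.2 * ((r / p.1.gcd r : ℕ) : ℤ) - h * (p.1 / p.1.gcd r : ℕ))) * hε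
    + ((p.1 / p.1.gcd r : ℕ) : ℤ) * hbez + v * ((p.1 / p.1.gcd r : ℕ) : ℤ) * hr

lemma card_filter_pairDet_eq_zero_le {M x : ℝ} (hr : 0 < r)
    (hh : IsCoprime h r) (hS : ∀ q ∈ 𝒮, M < (q : ℝ)) (hrx : (r : ℝ) ≤ x) :
    (((fareyPairs 𝒮 α Δ).filter fun p => pairDet r h p = 0).card : ℝ) ≤
      if M < x then 1 else 0 := by
  have hfst : ∀ p ∈ (fareyPairs 𝒮 α Δ).filter (fun p => pairDet r h p = 0), p.1 = r :=
    fun p hp => fst_eq_of_pairDet_eq_zero hr hh (mem_filter.1 hp).1 (mem_filter.1 hp).2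
  split_ifs with hMx
  · exact_mod_cast card_le_one.2 fun p hp p' hp' => eq_of_pairDet_eq hr
      ((hfst p hp).trans (hfst p' hp').symm) ((mem_filter.1 hp).2.trans (mem_filter.1 hp').2.symm)
  · simp only [Nat.cast_nonpos, card_eq_zero]
    refine eq_empty_of_forall_notMem fun p hp => hMx ?_
    have := hS _ (of_mem_fareyPairs (mem_filter.1 hp).1).1
    rw [hfst p hp] at this
    linarith

end FareyPairs

section Counting

variable {𝒮 : Finset ℕ} {M Q α Δ z : ℝ} {r : ℕ} {h u v ε : ℤ} {p : Σ _ : ℕ, ℕ}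

lemma pos_reducedPairDet (hpos : 0 < ε * pairDet r h p) : 0 < ε * reducedPairDet r h p := by
  rw [← gcd_mul_reducedPairDet, mul_left_comm] at hpos
  exact pos_of_mul_pos_right hpos (by positivity)

lemma toNat_reducedPairDet_le (hM : 0 ≤ M) (hMQ : M ≤ Q) (hr : 0 < r)
    (hS : ∀ q ∈ 𝒮, M < (q : ℝ) ∧ (q : ℝ) ≤ M + Q) (hε : ε * ε = 1)
    (hz : z = max Δ ((|α - h / r| + Δ) / 2))
    (hp : p ∈ fareyPairs 𝒮 α Δ) (hpos : 0 < ε * pairDet r h p) :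
    (ε * reducedPairDet r h p).toNat ≤ ⌊4 * r * z * Q / p.1.gcd r⌋₊ := by
  obtain ⟨hpS, -, -, ha⟩ := of_mem_fareyPairs hp
  have hg : (0 : ℝ) < p.1.gcd r := by exact_mod_cast Nat.gcd_pos_of_pos_right _ hr
  have habs : |ε| = 1 := Int.isUnit_iff_abs_eq.1 (IsUnit.of_mul_eq_one ε hε)
  have hle : (p.1.gcd r : ℤ) * (ε * reducedPairDet r h p) ≤ |pairDet r h p| := by
    rw [mul_left_comm, gcd_mul_reducedPairDet]
    exact (le_abs_self _).trans (by rw [abs_mul, habs, one_mul])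
  have hdet : ((|pairDet r h p| : ℤ) : ℝ) ≤ 4 * r * z * Q := by
    push_cast [pairDet]
    exact abs_mul_sub_mul_le_four_mul hM hMQ (by exact_mod_cast hr) (hS _ hpS) ha hz
  refine Nat.le_floor ?_
  rw [le_div_iff₀ hg, mul_comm]
  have htoNat : ((ε * reducedPairDet r h p).toNat : ℝ) = ((ε * reducedPairDet r h p : ℤ) : ℝ) :=
    by exact_mod_cast Int.toNat_of_nonneg (pos_reducedPairDet hpos).le
  calc (p.1.gcd r : ℝ) * (ε * reducedPairDet r h p).toNat
      = (((p.1.gcd r : ℤ) * (ε * reducedPairDet r h p) : ℤ) : ℝ) := by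
        rw [htoNat]; push_cast; ring
    _ ≤ 4 * r * z * Q := le_trans (by exact_mod_cast hle) hdet

lemma gcd_toNat_reducedPairDet (hr : 0 < r) (hbez : u * h + v * r = 1) (hε : ε * ε = 1)
    (hpos : 0 < ε * pairDet r h p) :
    Nat.gcd (ε * reducedPairDet r h p).toNat (r / p.1.gcd r) = 1 := by
  have hcop : IsCoprime (ε * reducedPairDet r h p) (r / p.1.gcd r : ℕ) :=
    IsCoprime.mul_left ⟨ε, 0, by rw [hε, zero_mul, add_zero]⟩
      (isCoprime_reducedPairDet hr ⟨u, v, hbez⟩)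
  rw [← Int.toNat_of_nonneg (pos_reducedPairDet hpos).le] at hcop
  exact Nat.isCoprime_iff_coprime.1 hcop

lemma card_le_seven_mul_A_of_reducedPairDet_eq (hM : 0 ≤ M) (hMQ : M ≤ Q) (hΔ : 0 < Δ) (hr : 0 < r)
    (hS : ∀ q ∈ 𝒮, M < (q : ℝ) ∧ (q : ℝ) ≤ M + Q) (hbez : u * h + v * r = 1) (hε : ε * ε = 1)
    (hz : z = max Δ ((|α - h / r| + Δ) / 2)) {t m : ℕ} {F : Finset (Σ _ : ℕ, ℕ)}
    (hF : ∀ p ∈ F, p ∈ fareyPairs 𝒮 α Δ ∧ p.1.gcd r = t ∧ ε * reducedPairDet r h p = m) :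
    F.card ≤ 7 * A 𝒮 M Q t (r / t) (-ε * u * m) (Δ * Q / (t * z)) := by
  obtain rfl | ⟨p₀, hp₀⟩ := F.eq_empty_or_nonempty
  · simp
  have ht : 0 < t := (hF p₀ hp₀).2.1 ▸ Nat.gcd_pos_of_pos_right _ hr
  have htR : (0 : ℝ) < t := by exact_mod_cast ht
  have hQ : 0 < Q := by
    have := hS _ (of_mem_fareyPairs (hF p₀ hp₀).1).1
    linarith
  have hz0 : 0 < z := hz ▸ lt_max_of_lt_left hΔ
  have hdvd : ∀ p ∈ F, t ∣ p.1 := fun p hp => (hF p hp).2.1 ▸ Nat.gcd_dvd_left _ _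
  have hdet : ∀ p ∈ F, pairDet r h p = t * (ε * m) := by
    intro p hp
    obtain ⟨-, hgcd, hm⟩ := hF p hp
    rw [← gcd_mul_reducedPairDet, hgcd, ← hm, ← mul_assoc ε, hε, one_mul]
  have hinj : Set.InjOn (fun p : Σ _ : ℕ, ℕ => p.1 / t) F := by
    intro p hp p' hp' heq
    refine eq_of_pairDet_eq hr ?_ ((hdet p hp).trans (hdet p' hp').symm)
    rw [← Nat.div_mul_cancel (hdvd p hp), ← Nat.div_mul_cancel (hdvd p' hp')]
    exact congrArg (· * t) heq
  rw [← card_image_of_injOn hinj]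
  refine card_le_mul_A_of_abs_sub_le hS ht (by positivity) 6 ?_ ?_
  · simp only [mem_image]
    rintro _ ⟨p, hp, rfl⟩
    obtain ⟨hpF, hgcd, hm⟩ := hF p hp
    refine ⟨by rw [Nat.mul_div_cancel' (hdvd p hp)]; exact (of_mem_fareyPairs hpF).1, ?_⟩
    have := modEq_reducedPairDet (p := p) hbez hε
    rwa [hgcd, hm] at this
  · simp only [mem_image]
    rintro _ ⟨p, hp, rfl⟩ _ ⟨p', hp', rfl⟩
    obtain ⟨hpS, -, -, ha⟩ := of_mem_fareyPairs (hF p hp).1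
    obtain ⟨hpS', -, -, ha'⟩ := of_mem_fareyPairs (hF p' hp').1
    have hdet' : ((p.2 * r - h * p.1 : ℤ) : ℝ) = ((p'.2 * r - h * p'.1 : ℤ) : ℝ) :=
      congrArg _ ((hdet p hp).trans (hdet p' hp').symm)
    push_cast at hdet'
    have hspan := abs_sub_mul_le_of_mul_sub_mul_eq hM hMQ (by exact_mod_cast hr)
      (hS _ hpS) (hS _ hpS') ha ha' hdet' hz
    rw [Nat.cast_div (hdvd p hp) htR.ne', Nat.cast_div (hdvd p' hp') htR.ne']
    calc |(p.1 : ℝ) / t - p'.1 / t| = |(p.1 : ℝ) - p'.1| / t := by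
          rw [← sub_div, abs_div, abs_of_pos htR]
      _ ≤ 6 * Δ * Q / z / t := by gcongr; rwa [le_div_iff₀ hz0]
      _ = 6 * (Δ * Q / (t * z)) := by field_simp

lemma card_filter_pos_pairDet_le (hM : 0 ≤ M) (hMQ : M ≤ Q) (hΔ : 0 < Δ) (hr : 0 < r)
    (hS : ∀ q ∈ 𝒮, M < (q : ℝ) ∧ (q : ℝ) ≤ M + Q) (hbez : u * h + v * r = 1) (hε : ε * ε = 1)
    (hz : z = max Δ ((|α - h / r| + Δ) / 2)) :
    ((fareyPairs 𝒮 α Δ).filter fun p => 0 < ε * pairDet r h p).card ≤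
      7 * ∑ t ∈ r.divisors, ∑ m ∈ (Icc 1 ⌊4 * r * z * Q / t⌋₊).filter
        (fun m => Nat.gcd m (r / t) = 1), A 𝒮 M Q t (r / t) (-ε * u * m) (Δ * Q / (t * z)) := by
  classical
  let index : (Σ _ : ℕ, ℕ) → (Σ _ : ℕ, ℕ) :=
    fun p => ⟨p.1.gcd r, (ε * reducedPairDet r h p).toNat⟩
  have hmaps : Set.MapsTo index ((fareyPairs 𝒮 α Δ).filter fun p => 0 < ε * pairDet r h p)
      (r.divisors.sigma fun t => (Icc 1 ⌊4 * r * z * Q / t⌋₊).filter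
        (fun m => Nat.gcd m (r / t) = 1)) := by
    intro p hp
    obtain ⟨hp, hpos⟩ := mem_filter.1 hp
    simp only [coe_sigma, Set.mem_sigma_iff, mem_coe, Nat.mem_divisors, mem_filter, mem_Icc]
    exact ⟨⟨Nat.gcd_dvd_right _ _, hr.ne'⟩,
      ⟨Int.lt_toNat.2 (pos_reducedPairDet hpos), toNat_reducedPairDet_le hM hMQ hr hS hε hz hp hpos⟩,
      gcd_toNat_reducedPairDet hr hbez hε hpos⟩
  rw [card_eq_sum_card_fiberwise hmaps, sum_sigma, mul_sum]
  refine sum_le_sum fun t _ => ?_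
  rw [mul_sum]
  refine sum_le_sum fun m _ =>
    card_le_seven_mul_A_of_reducedPairDet_eq hM hMQ hΔ hr hS hbez hε hz fun p hp => ?_
  obtain ⟨⟨hp, hpos⟩, hidx⟩ := by simpa only [mem_filter] using hp
  obtain ⟨hgcd, hm⟩ := Sigma.mk.inj_iff.1 hidx
  refine ⟨hp, hgcd, ?_⟩
  rw [← eq_of_heq hm, Int.toNat_of_nonneg (pos_reducedPairDet hpos).le]

end Counting

/-- The (attained) triple maximum is expressed by quantifying over all upper bounds `B`
for the inner double sum. -/
theorem stmt_5 :
    ∃ c₁₁ : ℝ, 0 < c₁₁ ∧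
      ∀ (M Q Δ α : ℝ) (𝒮 : Finset ℕ),
        0 ≤ M → M ≤ Q →
        (∀ q ∈ 𝒮, 0 < q ∧ M < (q : ℝ) ∧ (q : ℝ) ≤ M + Q) →
        0 < Δ → Δ ≤ 1 / 2 →
        ∀ B : ℝ,
          (∀ r : ℕ, 0 < r → (r : ℝ) ≤ 1 / Real.sqrt Δ →
            ∀ z : ℝ, Δ ≤ z → z ≤ Real.sqrt Δ / r →
              ∀ h : ℤ, Int.gcd h (r : ℤ) = 1 →
                (∑ t ∈ r.divisors,
                  ∑ m ∈ (Finset.Icc 1 ⌊4 * r * z * Q / t⌋₊).filter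
                      (fun m => Nat.gcd m (r / t) = 1),
                    (A 𝒮 M Q t (r / t) (h * m) (Δ * Q / (t * z)) : ℝ)) ≤ B) →
          ((∑ q ∈ 𝒮, ((Finset.Icc 1 q).filter
              (fun a => Nat.gcd a q = 1 ∧ α - Δ ≤ (a : ℝ) / q ∧ (a : ℝ) / q ≤ α + Δ)).card : ℕ) : ℝ)
            ≤ c₁₁ * ((if M < 1 / Real.sqrt Δ then (1 : ℝ) else 0) + B) := by
  refine ⟨14, by norm_num, fun M Q Δ α 𝒮 hM hMQ hS hΔ hΔ₂ B hB => ?_⟩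
  have hS' : ∀ q ∈ 𝒮, M < (q : ℝ) ∧ (q : ℝ) ≤ M + Q := fun q hq => (hS q hq).2
  obtain ⟨r, h, hr, hr_le, hβ, u, v, hbez⟩ :=
    exists_isCoprime_abs_sub_div_mul_le (Real.sqrt_pos.2 hΔ) (Real.sqrt_le_one.2 (by linarith)) α
  set z := max Δ ((|α - h / r| + Δ) / 2) with hz
  have hz_le : z ≤ √Δ / r := max_le_sqrt_div hΔ (by exact_mod_cast hr) hr_le hβ
  have hside : ∀ ε : ℤ, ε * ε = 1 →
      (((fareyPairs 𝒮 α Δ).filter fun p => 0 < ε * pairDet r h p).card : ℝ) ≤ 7 * B := by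
    intro ε hε
    refine (Nat.cast_le.2 (card_filter_pos_pairDet_le hM hMQ hΔ hr hS' hbez hε hz)).trans ?_
    push_cast
    gcongr
    refine hB r hr hr_le z (le_max_left _ _) hz_le (-ε * u) (Int.isCoprime_iff_gcd_eq_one.1 ?_)
    exact ⟨-ε * h, v, by linear_combination hbez + u * h * hε⟩
  rw [← card_fareyPairs]
  calc ((fareyPairs 𝒮 α Δ).card : ℝ)
      ≤ (((fareyPairs 𝒮 α Δ).filter fun p => pairDet r h p = 0).card : ℝ) +
          ((fareyPairs 𝒮 α Δ).filter fun p => 0 < 1 * pairDet r h p).card +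
          ((fareyPairs 𝒮 α Δ).filter fun p => 0 < -1 * pairDet r h p).card := by
        exact_mod_cast card_le_card_filter_eq_zero_add_sign _ _
    _ ≤ (if M < 1 / √Δ then 1 else 0) + 7 * B + 7 * B := by
        gcongr
        · exact card_filter_pairDet_eq_zero_le hr ⟨u, v, hbez⟩ (fun q hq => (hS' q hq).1) hr_le
        · exact hside 1 (by norm_num)
        · exact hside (-1) (by norm_num)
    _ ≤ 14 * ((if M < 1 / √Δ then 1 else 0) + B) := by split_ifs <;> linarith
end

section
/- There is an absolute constant c > 0 such that for all Q₁ ≥ 1, all N ≥ 1 and all sequences (a_n) of complex numbers, ∑_{q ≤ Q₁} ∑_{a=1, gcd(a,q)=1}^{q²} |S(a/q²)|² ≤ c · Q₁ · (N + Q₁²) · Z, where the outer sum runs over positive integers q ≤ Q₁ and the inner sum over integers 1 ≤ a ≤ q² with gcd(a,q)=1. -/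
open Finset

/-! Fix `q` and put `M = q²`. Dropping the coprimality condition, the inner sum runs over a
complete residue system modulo `M`. Grouping `n` by its residue `r` modulo `M` turns `S(a/M)`
into a discrete Fourier transform of the class sums `b_r = ∑_{n ≡ r} a_n`, so Parseval gives
`∑_a |S(a/M)|² = M ∑_r |b_r|²`. Each class has at most `N/M + 1` elements, so by
Cauchy–Schwarz this is at most `(N + M) Z ≤ (N + Q₁²) Z`; summing over `q ≤ Q₁` gives the
bound with `c = 1`. -/

open Complex ComplexConjugate

lemma sum_Icc_pow_eq_ite_of_pow_eq_one {R : Type*} [CommRing R] [IsDomain R] [DecidableEq R]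
    {w : R} {M : ℕ} (hw : w ^ M = 1) : ∑ a ∈ Icc 1 M, w ^ a = if w = 1 then (M : R) else 0 := by
  split_ifs with h1
  · simp [h1]
  · have : (∑ a ∈ Icc 1 M, w ^ a) * (w - 1) = 0 := by
      rw [← Ico_add_one_right_eq_Icc, geom_sum_Ico_mul w (by omega), pow_succ, hw]
      ring
    exact (mul_eq_zero.1 this).resolve_right (sub_ne_zero.2 h1)

lemma IsPrimitiveRoot.sum_Icc_pow_mul_conj_pow {ζ : ℂ} {M : ℕ} (hζ : IsPrimitiveRoot ζ M)
    {r s : ℕ} (hr : r < M) (hs : s < M) :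
    ∑ a ∈ Icc 1 M, (ζ ^ a) ^ r * conj ((ζ ^ a) ^ s) = if r = s then (M : ℂ) else 0 := by
  have hζ1 : ‖ζ‖ = 1 := hζ.norm'_eq_one (by omega)
  have hterm : ∀ a : ℕ, (ζ ^ a) ^ r * conj ((ζ ^ a) ^ s) = (ζ ^ r * (ζ ^ s)⁻¹) ^ a := by
    intro a
    rw [map_pow, map_pow, ← inv_eq_conj hζ1]
    ring
  have hpow : (ζ ^ r * (ζ ^ s)⁻¹) ^ M = 1 := by
    rw [mul_pow, inv_pow, ← pow_mul, ← pow_mul, pow_mul', pow_mul' ζ s, hζ.pow_eq_one]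
    simp
  have hone : ζ ^ r * (ζ ^ s)⁻¹ = 1 ↔ r = s := by
    rw [mul_inv_eq_one₀ (pow_ne_zero _ (hζ.ne_zero (by omega)))]
    exact ⟨hζ.pow_inj hr hs, fun h ↦ h ▸ rfl⟩
  simp_rw [hterm, sum_Icc_pow_eq_ite_of_pow_eq_one hpow, hone]

lemma IsPrimitiveRoot.sum_Icc_norm_sq_sum_mul_pow {ζ : ℂ} {M : ℕ} (hζ : IsPrimitiveRoot ζ M)
    (b : ℕ → ℂ) :
    ∑ a ∈ Icc 1 M, ‖∑ r ∈ range M, b r * (ζ ^ a) ^ r‖ ^ 2 = M * ∑ r ∈ range M, ‖b r‖ ^ 2 := by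
  apply ofReal_injective
  have hexpand : ∀ a, (‖∑ r ∈ range M, b r * (ζ ^ a) ^ r‖ : ℂ) ^ 2 =
      ∑ r ∈ range M, ∑ s ∈ range M, b r * conj (b s) * ((ζ ^ a) ^ r * conj ((ζ ^ a) ^ s)) := by
    intro a
    rw [← ofReal_pow, ← normSq_eq_norm_sq, ← mul_conj, map_sum, sum_mul_sum]
    simp only [map_mul]
    exact sum_congr rfl fun _ _ ↦ sum_congr rfl fun _ _ ↦ by ring
  push_cast
  simp_rw [hexpand]
  calc ∑ a ∈ Icc 1 M, ∑ r ∈ range M, ∑ s ∈ range M,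
        b r * conj (b s) * ((ζ ^ a) ^ r * conj ((ζ ^ a) ^ s))
      = ∑ r ∈ range M, ∑ s ∈ range M,
          b r * conj (b s) * ∑ a ∈ Icc 1 M, (ζ ^ a) ^ r * conj ((ζ ^ a) ^ s) := by
        rw [sum_comm]
        refine sum_congr rfl fun r _ ↦ ?_
        rw [sum_comm]
        simp_rw [mul_sum]
    _ = ∑ r ∈ range M, ∑ s ∈ range M, b r * conj (b s) * if r = s then (M : ℂ) else 0 :=
        sum_congr rfl fun r hr ↦ sum_congr rfl fun s hs ↦ by
          rw [hζ.sum_Icc_pow_mul_conj_pow (mem_range.1 hr) (mem_range.1 hs)]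
    _ = M * ∑ r ∈ range M, (‖b r‖ : ℂ) ^ 2 := by
        simp only [mul_ite, mul_zero, sum_ite_eq, mul_sum]
        refine sum_congr rfl fun r hr ↦ ?_
        rw [if_pos hr, mul_conj, normSq_eq_norm_sq]
        push_cast
        ring

lemma sum_mul_pow_eq_sum_range_mod {R : Type*} [CommSemiring R] {x : R} {M : ℕ} (hM : 0 < M)
    (hx : x ^ M = 1) (s : Finset ℕ) (f : ℕ → R) :
    ∑ n ∈ s, f n * x ^ n = ∑ r ∈ range M, (∑ n ∈ s with n % M = r, f n) * x ^ r := by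
  rw [← sum_fiberwise_of_maps_to (g := (· % M)) (t := range M)
    (fun n _ ↦ mem_range.2 (Nat.mod_lt n hM))]
  refine sum_congr rfl fun r _ ↦ ?_
  rw [sum_mul]
  refine sum_congr rfl fun n hn ↦ ?_
  rw [pow_eq_pow_mod n hx, (mem_filter.1 hn).2]

lemma card_filter_Icc_mod_eq_le (K M r : ℕ) : #{n ∈ Icc 1 K | n % M = r} ≤ K / M + 1 := by
  simpa using card_le_card_of_injOn (· / M) (t := range (K / M + 1))
    (fun n hn ↦ by
      simp only [coe_filter, mem_Icc, Set.mem_ofPred_eq] at hn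
      simpa [Nat.lt_succ_iff] using Nat.div_le_div_right hn.1.2)
    (fun n hn m hm h ↦ by
      simp only [coe_filter, mem_Icc, Set.mem_ofPred_eq] at hn hm
      rw [← Nat.div_add_mod n M, ← Nat.div_add_mod m M, hn.2, hm.2]
      exact congrArg (M * · + r) h)

lemma norm_sum_sq_le_card_mul_sum_norm_sq {ι E : Type*} [SeminormedAddCommGroup E]
    (s : Finset ι) (f : ι → E) : ‖∑ i ∈ s, f i‖ ^ 2 ≤ #s * ∑ i ∈ s, ‖f i‖ ^ 2 :=
  (pow_le_pow_left₀ (norm_nonneg _) (norm_sum_le s f) 2).trans (sq_sum_le_card_mul_sum_sq ..)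

lemma mul_sum_range_norm_sq_sum_mod_le {M : ℕ} (hM : 0 < M) (K : ℕ) (f : ℕ → ℂ) :
    M * ∑ r ∈ range M, ‖∑ n ∈ Icc 1 K with n % M = r, f n‖ ^ 2
      ≤ (K + M) * ∑ n ∈ Icc 1 K, ‖f n‖ ^ 2 := by
  have hclass : ∀ r, ‖∑ n ∈ Icc 1 K with n % M = r, f n‖ ^ 2
      ≤ (K / M + 1 : ℕ) * ∑ n ∈ Icc 1 K with n % M = r, ‖f n‖ ^ 2 := fun r ↦
    (norm_sum_sq_le_card_mul_sum_norm_sq _ f).trans <| by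
      gcongr
      exact card_filter_Icc_mod_eq_le K M r
  have hcount : (M : ℝ) * (K / M + 1 : ℕ) ≤ K + M := by
    exact_mod_cast (by rw [mul_add, mul_one]; exact Nat.add_le_add_right (Nat.mul_div_le K M) M)
  calc (M : ℝ) * ∑ r ∈ range M, ‖∑ n ∈ Icc 1 K with n % M = r, f n‖ ^ 2
      ≤ M * ((K / M + 1 : ℕ) * ∑ r ∈ range M, ∑ n ∈ Icc 1 K with n % M = r, ‖f n‖ ^ 2) := by
        gcongr
        rw [mul_sum]
        exact sum_le_sum fun r _ ↦ hclass r
    _ = M * (K / M + 1 : ℕ) * ∑ n ∈ Icc 1 K, ‖f n‖ ^ 2 := by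
        rw [sum_fiberwise_of_maps_to (fun n _ ↦ mem_range.2 (Nat.mod_lt n hM)), mul_assoc]
    _ ≤ (K + M) * ∑ n ∈ Icc 1 K, ‖f n‖ ^ 2 := by
        gcongr ?_ * _

lemma sum_Icc_norm_sq_expSum_div_le (N : ℝ) (f : ℕ → ℂ) {M : ℕ} (hM : 0 < M) :
    ∑ a ∈ Icc 1 M, ‖expSum N f ((a : ℝ) / M)‖ ^ 2 ≤ (⌊N⌋₊ + M) * Zsum N f := by
  set ζ := exp (2 * Real.pi * I / M)
  have hζ : IsPrimitiveRoot ζ M := isPrimitiveRoot_exp M hM.ne'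
  have hfold : ∀ a : ℕ, expSum N f ((a : ℝ) / M) =
      ∑ r ∈ range M, (∑ n ∈ Icc 1 ⌊N⌋₊ with n % M = r, f n) * (ζ ^ a) ^ r := by
    intro a
    rw [← sum_mul_pow_eq_sum_range_mod hM (by rw [pow_right_comm, hζ.pow_eq_one, one_pow])]
    refine sum_congr rfl fun n _ ↦ ?_
    rw [← exp_nat_mul, ← exp_nat_mul]
    push_cast
    ring_nf
  simp_rw [hfold, hζ.sum_Icc_norm_sq_sum_mul_pow]
  exact mul_sum_range_norm_sq_sum_mod_le hM _ f

/-- The bound (Z2): `∑_{q ≤ Q₁} ∑_{(a,q)=1, a ≤ q²} |S(a/q²)|² ≤ c Q₁ (N + Q₁²) Z`. -/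
theorem stmt_7 :
    ∃ c : ℝ, 0 < c ∧
      ∀ (Q₁ N : ℝ) (f : ℕ → ℂ),
        1 ≤ Q₁ → 1 ≤ N →
        ∑ q ∈ Finset.Icc 1 ⌊Q₁⌋₊,
            ∑ a ∈ (Finset.Icc 1 (q ^ 2)).filter (fun a => Nat.gcd a q = 1),
              ‖expSum N f ((a : ℝ) / (q ^ 2 : ℕ))‖ ^ 2
          ≤ c * Q₁ * (N + Q₁ ^ 2) * Zsum N f := by
  refine ⟨1, one_pos, fun Q₁ N f hQ hN ↦ ?_⟩
  have hZ : 0 ≤ Zsum N f := sum_nonneg fun _ _ ↦ sq_nonneg _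
  have hterm : ∀ q ∈ Icc 1 ⌊Q₁⌋₊,
      ∑ a ∈ (Icc 1 (q ^ 2)).filter (fun a => Nat.gcd a q = 1),
        ‖expSum N f ((a : ℝ) / (q ^ 2 : ℕ))‖ ^ 2 ≤ (N + Q₁ ^ 2) * Zsum N f := by
    intro q hq
    obtain ⟨hq1, hqQ⟩ := mem_Icc.1 hq
    have hqQ' : (q : ℝ) ≤ Q₁ := (Nat.cast_le.2 hqQ).trans (Nat.floor_le (by linarith))
    calc _ ≤ ∑ a ∈ Icc 1 (q ^ 2), ‖expSum N f ((a : ℝ) / (q ^ 2 : ℕ))‖ ^ 2 :=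
          sum_le_sum_of_subset_of_nonneg (filter_subset _ _) fun _ _ _ ↦ sq_nonneg _
      _ ≤ (⌊N⌋₊ + (q ^ 2 : ℕ)) * Zsum N f := sum_Icc_norm_sq_expSum_div_le N f (pow_pos hq1 2)
      _ ≤ (N + Q₁ ^ 2) * Zsum N f := by
          push_cast
          gcongr
          exact Nat.floor_le (by linarith)
  calc _ ≤ ∑ _q ∈ Icc 1 ⌊Q₁⌋₊, (N + Q₁ ^ 2) * Zsum N f := sum_le_sum hterm
    _ = ⌊Q₁⌋₊ * ((N + Q₁ ^ 2) * Zsum N f) := by simp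
    _ ≤ Q₁ * ((N + Q₁ ^ 2) * Zsum N f) := by
        gcongr
        exact Nat.floor_le (by linarith)
    _ = 1 * Q₁ * (N + Q₁ ^ 2) * Zsum N f := by ring
end

section
/- Let Q ≥ 1 be a real number and let t be a positive integer. Let 𝒮(Q) be the set of perfect squares in the interval (Q, 2Q], and let 𝒮_t(Q) = { q ∈ ℕ : tq ∈ 𝒮(Q) }. Then the cardinality of 𝒮_t(Q) satisfies |𝒮_t(Q)| ≤ √(2Q) / f_t. -/
/-!
If `t * q = r * r`, then every `p ^ v_p(t)` divides `r ^ 2`, so `p ^ ⌈v_p(t)/2⌉` divides `r`, i.e.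
`f_t ∣ r`. Since `q ↦ r` is injective and `0 < r ≤ √(2Q)`, the elements of `𝒮_t(Q)` are counted
by the positive multiples of `f_t` up to `⌊√(2Q)⌋`, of which there are `⌊√(2Q)⌋ / f_t`.
-/

open Finset

/-- `f_t = ∏_{p ∣ t} p^{⌈v_p(t)/2⌉}`, where `v_p(t)` is the `p`-adic valuation of `t`. -/
def ft (t : ℕ) : ℕ :=
  ∏ p ∈ t.primeFactors, p ^ ((t.factorization p + 1) / 2)

theorem ft_eq_prod_mapRange (t : ℕ) :
    ft t = (t.factorization.mapRange (fun k => (k + 1) / 2) rfl).prod (· ^ ·) := by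
  rw [Finsupp.prod_mapRange_index fun _ => pow_zero _]
  rfl

theorem factorization_ft (t : ℕ) :
    (ft t).factorization = t.factorization.mapRange (fun k => (k + 1) / 2) rfl := by
  rw [ft_eq_prod_mapRange]
  exact Nat.prod_pow_factorization_eq_self fun p hp =>
    Nat.prime_of_mem_primeFactors (Finsupp.support_mapRange hp)

theorem ft_pos (t : ℕ) : 0 < ft t :=
  prod_pos fun _ hp => pow_pos (Nat.prime_of_mem_primeFactors hp).pos _

theorem ft_dvd_of_dvd_mul_self {t m : ℕ} (h : t ∣ m * m) : ft t ∣ m := by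
  rcases eq_or_ne m 0 with rfl | hm
  · exact dvd_zero _
  have ht : t ≠ 0 := by rintro rfl; simp_all
  rw [← Nat.factorization_le_iff_dvd (ft_pos t).ne' hm, factorization_ft]
  intro p
  have := (Nat.factorization_le_iff_dvd ht (mul_ne_zero hm hm)).2 h p
  rw [Nat.factorization_mul hm hm] at this
  simp only [Finsupp.mapRange_apply, Finsupp.add_apply] at this ⊢
  omega

theorem ncard_le_div_ft {t N : ℕ} {s : Set ℕ}
    (hs : ∀ q ∈ s, ∃ r, 0 < r ∧ r ≤ N ∧ t * q = r * r) : s.ncard ≤ N / ft t := by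
  rw [← Nat.Ioc_filter_dvd_card_eq_div, ← Set.ncard_coe_finset]
  refine Set.ncard_le_ncard_of_injOn (fun q => Nat.sqrt (t * q)) ?_ ?_
  · intro q hq
    obtain ⟨r, hr0, hrN, hr⟩ := hs q hq
    simpa [hr, Nat.sqrt_eq] using ⟨⟨hr0, hrN⟩, ft_dvd_of_dvd_mul_self ⟨q, hr.symm⟩⟩
  · intro q₁ hq₁ q₂ hq₂ hsqrt
    obtain ⟨r₁, hr₁0, -, hr₁⟩ := hs q₁ hq₁
    obtain ⟨r₂, -, -, hr₂⟩ := hs q₂ hq₂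
    have ht : t ≠ 0 := by rintro rfl; exact hr₁0.ne' (by simpa using hr₁.symm)
    simp only [hr₁, hr₂, Nat.sqrt_eq] at hsqrt
    exact Nat.eq_of_mul_eq_mul_left (Nat.pos_of_ne_zero ht) (by rw [hr₁, hr₂, hsqrt])

theorem stmt_10_general (Q : ℝ) (t : ℕ) :
    (({q : ℕ | IsSquare (t * q) ∧ Q < (t * q : ℕ) ∧ ((t * q : ℕ) : ℝ) ≤ 2 * Q}.ncard : ℕ) : ℝ)
      ≤ Real.sqrt (2 * Q) / ft t := by
  have hcount := ncard_le_div_ft (t := t) (N := ⌊√(2 * Q)⌋₊)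
    (s := {q : ℕ | IsSquare (t * q) ∧ Q < (t * q : ℕ) ∧ ((t * q : ℕ) : ℝ) ≤ 2 * Q}) <| by
    rintro q ⟨⟨r, hr⟩, hQ, h2Q⟩
    rw [hr, Nat.cast_mul] at hQ h2Q
    have hr0 : 0 < r := by
      by_contra! h
      simp only [Nat.le_zero.1 h, Nat.cast_zero, mul_zero] at hQ h2Q
      linarith
    refine ⟨r, hr0, Nat.le_floor ?_, hr⟩
    rw [Real.le_sqrt (Nat.cast_nonneg r) (by linarith)]
    linarith
  calc _ ≤ ((⌊√(2 * Q)⌋₊ / ft t : ℕ) : ℝ) := by exact_mod_cast hcount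
    _ ≤ (⌊√(2 * Q)⌋₊ : ℝ) / ft t := Nat.cast_div_le
    _ ≤ √(2 * Q) / ft t := by gcongr; exact Nat.floor_le (Real.sqrt_nonneg _)

/-- The bound (25): with `𝒮(Q)` the set of perfect squares in `(Q, 2Q]` and
`𝒮_t(Q) = {q : tq ∈ 𝒮(Q)}`, we have `|𝒮_t(Q)| ≤ √(2Q) / f_t`. -/
theorem stmt_10 (Q : ℝ) (hQ : 1 ≤ Q) (t : ℕ) (ht : 0 < t) :
    (({q : ℕ | IsSquare (t * q) ∧ Q < (t * q : ℕ) ∧ ((t * q : ℕ) : ℝ) ≤ 2 * Q}.ncard : ℕ) : ℝ)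
      ≤ Real.sqrt (2 * Q) / ft t :=
  stmt_10_general Q t
end

section
/- For every positive integer r, ∑_{t ∣ r} 1/f_t ≤ (r/φ(r))², where the sum runs over the positive divisors t of r and φ is Euler's totient function. -/
/-!
Both sides are multiplicative in `r`, so it suffices to compare the local factors at a prime `p`
with `x = 1/p`. The exponents `⌈i/2⌉` take the value `0` once and every value `k ≥ 1` twice,
so the local factor of the left side is at most `1 + 2x/(1 - x) = (1 - x²)/(1 - x)²`,
while that of the right side is `1/(1 - x)²`.
-/

open Finset

namespace Nat

theorem Coprime.sum_divisors_mul_of_map_mul {R : Type*} [CommSemiring R] {g : ℕ → R}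
    (hg : ∀ m n, m.Coprime n → g (m * n) = g m * g n) {m n : ℕ} (hmn : m.Coprime n) :
    ∑ d ∈ (m * n).divisors, g d = (∑ d ∈ m.divisors, g d) * ∑ d ∈ n.divisors, g d := by
  rw [hmn.divisors_mul, sum_map, sum_mul_sum, ← sum_product']
  refine (sum_attach _ (fun d : ℕ × ℕ => g (d.1 * d.2))).trans (sum_congr rfl fun d hd => ?_)
  obtain ⟨hd₁, hd₂⟩ := mem_product.mp hd
  exact hg _ _ <| (hmn.coprime_dvd_left (dvd_of_mem_divisors hd₁)).coprime_dvd_right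
    (dvd_of_mem_divisors hd₂)

theorem sum_divisors_eq_prod_primeFactors {R : Type*} [CommSemiring R] {g : ℕ → R}
    (hg₁ : g 1 = 1) (hg : ∀ m n, m.Coprime n → g (m * n) = g m * g n) {n : ℕ} (hn : n ≠ 0) :
    ∑ d ∈ n.divisors, g d =
      ∏ p ∈ n.primeFactors, ∑ i ∈ range (n.factorization p + 1), g (p ^ i) := by
  rw [multiplicative_factorization (fun n => ∑ d ∈ n.divisors, g d)
    (fun _ _ => Coprime.sum_divisors_mul_of_map_mul hg) (by simp [hg₁]) hn]
  exact prod_congr rfl fun p hp => sum_divisors_prime_pow (prime_of_mem_primeFactors hp)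

theorem cast_div_totient_eq_prod_primeFactors {n : ℕ} (hn : n ≠ 0) :
    (n / φ n : ℝ) = ∏ p ∈ n.primeFactors, (1 - (p : ℝ)⁻¹)⁻¹ := by
  have h := congrArg (Rat.cast : ℚ → ℝ) (totient_eq_mul_prod_factors n)
  push_cast at h
  rw [h, prod_inv_distrib, div_mul_cancel_left₀ (cast_ne_zero.mpr hn)]

end Nat

theorem ft_eq_factorization_prod (t : ℕ) :
    ft t = t.factorization.prod fun p k => p ^ ((k + 1) / 2) := rfl

theorem ft_one : ft 1 = 1 := by simp [ft]

theorem Nat.Coprime.ft_mul {m n : ℕ} (h : m.Coprime n) : ft (m * n) = ft m * ft n := by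
  simp only [ft_eq_factorization_prod, factorization_mul_of_coprime h]
  exact Finsupp.prod_add_index_of_disjoint h.disjoint_primeFactors _

theorem ft_prime_pow {p : ℕ} (hp : p.Prime) (k : ℕ) : ft (p ^ k) = p ^ ((k + 1) / 2) := by
  rw [ft_eq_factorization_prod, hp.factorization_pow, Finsupp.prod_single_index (by simp)]

theorem hasSum_pow_add_one_div_two {x : ℝ} (hx₀ : 0 ≤ x) (hx₁ : x < 1) :
    HasSum (fun i => x ^ ((i + 1) / 2)) ((1 - x)⁻¹ + x * (1 - x)⁻¹) := by
  refine HasSum.even_add_odd ?_ ?_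
  · simpa only [show ∀ k, (2 * k + 1) / 2 = k by omega] using
      hasSum_geometric_of_lt_one hx₀ hx₁
  · simpa only [show ∀ k, (2 * k + 1 + 1) / 2 = k + 1 by omega, pow_succ'] using
      (hasSum_geometric_of_lt_one hx₀ hx₁).mul_left x

theorem sum_range_pow_add_one_div_two_le {x : ℝ} (hx₀ : 0 ≤ x) (hx₁ : x < 1) (n : ℕ) :
    ∑ i ∈ range n, x ^ ((i + 1) / 2) ≤ (1 - x)⁻¹ ^ 2 := by
  have hx : 1 - x ≠ 0 := by linarith
  calc ∑ i ∈ range n, x ^ ((i + 1) / 2) ≤ (1 - x)⁻¹ + x * (1 - x)⁻¹ :=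
        sum_le_hasSum _ (fun _ _ => by positivity) (hasSum_pow_add_one_div_two hx₀ hx₁)
    _ = (1 - x ^ 2) * (1 - x)⁻¹ ^ 2 := by field_simp; ring
    _ ≤ (1 - x)⁻¹ ^ 2 := mul_le_of_le_one_left (by positivity) (by nlinarith)

theorem sum_range_inv_ft_prime_pow_le {p : ℕ} (hp : p.Prime) (n : ℕ) :
    ∑ i ∈ range n, (ft (p ^ i) : ℝ)⁻¹ ≤ (1 - (p : ℝ)⁻¹)⁻¹ ^ 2 := by
  have hx₁ : (p : ℝ)⁻¹ < 1 := inv_lt_one_of_one_lt₀ (by exact_mod_cast hp.one_lt)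
  simpa only [ft_prime_pow hp, Nat.cast_pow, inv_pow] using
    sum_range_pow_add_one_div_two_le (by positivity) hx₁ n

/-- For every positive integer `r`: `∑_{t ∣ r} 1/f_t ≤ (r/φ(r))²`. -/
theorem stmt_14 (r : ℕ) (hr : 0 < r) :
    ∑ t ∈ r.divisors, (1 : ℝ) / ft t ≤ ((r : ℝ) / (Nat.totient r : ℝ)) ^ 2 := by
  calc ∑ t ∈ r.divisors, (1 : ℝ) / ft t
      = ∏ p ∈ r.primeFactors, ∑ i ∈ range (r.factorization p + 1), (ft (p ^ i) : ℝ)⁻¹ := by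
        simp only [one_div]
        exact Nat.sum_divisors_eq_prod_primeFactors (by simp [ft_one])
          (fun m n h => by rw [h.ft_mul, Nat.cast_mul, mul_inv]) hr.ne'
    _ ≤ ∏ p ∈ r.primeFactors, (1 - (p : ℝ)⁻¹)⁻¹ ^ 2 :=
        prod_le_prod (fun _ _ => sum_nonneg fun _ _ => by positivity)
          fun p hp => sum_range_inv_ft_prime_pow_le (Nat.prime_of_mem_primeFactors hp) _
    _ = ((r : ℝ) / (Nat.totient r : ℝ)) ^ 2 := by
        rw [prod_pow, Nat.cast_div_totient_eq_prod_primeFactors hr.ne']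
end
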